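/- Let (λ,p) ∈ ℤ^n_{++} × ℤ. Define for 1 ≤ i ≤ n−1 the elements W_i^+ = e at index ((λ_1+1,…,λ_{i−1}+1, λ_{i+1},…,λ_{n−1}, λ_n), p+λ_i−i+1) with value c_i^+ = −p+λ_i−i+2n, and W_i^− = e at index ((λ_1+1,…,λ_{i−1}+1, λ_{i+1},…,λ_{n−1}, −λ_n), p−λ_i−2n+i+1) with value c_i^− = −p−λ_i+i; and for i = n: W_n^+ = e at index ((λ_1+1,…,λ_{n−2}+1, λ_{n−1}+1), p+λ_n−n+1) with value c_n^+ = −p+λ_n+n, and W_n^− = e at index ((λ_1+1,…,λ_{n−2}+1, −λ_{n−1}−1), p−λ_n−n+1) with value c_n^− = −p−λ_n+n. Then the following are equivalent: (i) for every c ∈ ℤ the element Σ_{(i,ε) : (c_i^ε)² = c²} (−1)^{i−1} W_i^ε of F lies in the ℤ-span of the restriction elements {r(λ',p')}; (ii) p = n or λ_n = 0. (Theorem A(2): for G = SO₀(2,2n) a highest weight λ is good if and only if λ(H₀) = n√−1 or V_λ|_{SO(2n)} is self-dual.) -/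

import Mathlib

open scoped Classical

/-- The predicate defining `ℤ^k_{++}`: `λ_1 ≥ … ≥ λ_{k−1} ≥ |λ_k|`, equivalently
`|λ_j| ≤ λ_i` for all `i < j`. -/
def IsPP {k : ℕ} (l : Fin k → ℤ) : Prop := ∀ i j : Fin k, i < j → |l j| ≤ l i

/-- `ℤ^k_{++}` as a type. -/
abbrev ZPP (k : ℕ) : Type := {l : Fin k → ℤ // IsPP l}

/-- The free `ℤ`-module `F = K⁰(K_M)` on the basis `ℤ^{n−1}_{++} × ℤ` for
`G = SO₀(2,2n)` (here `n = n0 + 2`). -/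
abbrev FSO (n0 : ℕ) : Type := (ZPP (n0 + 1) × ℤ) →₀ ℤ

variable {n0 : ℕ}

/-- The interlacing conditions of the branching law from `SO(2n)` to `SO(2n−2)`:
`λ_i ≥ μ_i ≥ λ_{i+2}` for `1 ≤ i ≤ n−3`, `λ_{n−2} ≥ μ_{n−2} ≥ |λ_n|`, and
`λ_{n−1} ≥ |μ_{n−1}|` (written `0`-indexed, with `n = n0 + 2`). -/
def Interlace (l : Fin (n0 + 2) → ℤ) (μ : Fin (n0 + 1) → ℤ) : Prop :=
  (∀ i : ℕ, (h : i + 2 ≤ n0) →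
      μ ⟨i, by omega⟩ ≤ l ⟨i, by omega⟩ ∧ l ⟨i + 2, by omega⟩ ≤ μ ⟨i, by omega⟩) ∧
  (∀ _ : 1 ≤ n0,
      μ ⟨n0 - 1, by omega⟩ ≤ l ⟨n0 - 1, by omega⟩ ∧
        |l ⟨n0 + 1, by omega⟩| ≤ μ ⟨n0 - 1, by omega⟩) ∧
  |μ ⟨n0, by omega⟩| ≤ l ⟨n0, by omega⟩

/-- The tuple `(ℓ_1, …, ℓ_{n−1})` of the branching law (written `0`-indexed):
`ℓ_1 = λ_1 − max(λ_2, μ_1)`, `ℓ_i = min(λ_i, μ_{i−1}) − max(λ_{i+1}, μ_i)` for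
`2 ≤ i ≤ n−2`, and `ℓ_{n−1} = min(λ_{n−1}, μ_{n−2}) − max(|λ_n|, |μ_{n−1}|)`. -/
def lvec (l : Fin (n0 + 2) → ℤ) (μ : Fin (n0 + 1) → ℤ) : Fin (n0 + 1) → ℤ := fun i =>
  (if (i : ℕ) = 0 then l i.castSucc
    else min (l i.castSucc) (μ ⟨(i : ℕ) - 1, by have := i.isLt; omega⟩)) -
  (if (i : ℕ) = n0 then max |l (Fin.last (n0 + 1))| |μ (Fin.last n0)|
    else max (l i.succ) (μ i))

/-- The number `ℓ_n = sgn(λ_n)·sgn(μ_{n−1})·min(|λ_n|, |μ_{n−1}|)`. -/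
def lsgn (l : Fin (n0 + 2) → ℤ) (μ : Fin (n0 + 1) → ℤ) : ℤ :=
  Int.sign (l (Fin.last (n0 + 1))) * Int.sign (μ (Fin.last n0)) *
    min |l (Fin.last (n0 + 1))| |μ (Fin.last n0)|

/-- The multiplicity `m(k) = #{(k_1,…,k_{n−1}) ∈ ℤ^{n−1} : 0 ≤ k_i ≤ ℓ_i, Σ_i k_i = k}`. -/
noncomputable def mult (l : Fin (n0 + 2) → ℤ) (μ : Fin (n0 + 1) → ℤ) (k : ℤ) : ℕ :=
  ((Finset.Icc (0 : Fin (n0 + 1) → ℤ) (lvec l μ)).filter fun t => (∑ i, t i) = k).card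

/-- The restriction element
`r(λ,p) = Σ_μ Σ_{k=0}^{ℓ} m(k) · e_{(μ, p+ℓ_n+2k−ℓ)}`, the class of
`π_{λ,p}|_{K_M}` (the outer sum is over `μ ∈ ℤ^{n−1}_{++}` satisfying the
interlacing conditions, all of which lie in the box `[−λ_1, λ_1]^{n−1}`). -/
noncomputable def rSO (l : Fin (n0 + 2) → ℤ) (p : ℤ) : FSO n0 :=
  ∑ μ ∈ Finset.Icc (fun _ : Fin (n0 + 1) => -(l 0)) (fun _ : Fin (n0 + 1) => l 0),
    if h : IsPP μ ∧ Interlace l μ then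
      ∑ k ∈ Finset.Icc (0 : ℤ) (∑ i, lvec l μ i),
        (mult l μ k : ℤ) •
          Finsupp.single ((⟨μ, h.1⟩ : ZPP (n0 + 1)),
            p + lsgn l μ + 2 * k - ∑ i, lvec l μ i) 1
    else 0

/-- `μ* = (μ_1, …, μ_{n−2}, −μ_{n−1})`. -/
def starPP (μ : ZPP (n0 + 1)) : ZPP (n0 + 1) :=
  ⟨fun i => if i = Fin.last n0 then -(μ.1 i) else μ.1 i, by
    intro i j hij
    dsimp only
    have hij' : (i : ℕ) < (j : ℕ) := hij
    have hi : ¬(i = Fin.last n0) := by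
      intro h
      have : (i : ℕ) = n0 := by simpa using congrArg Fin.val h
      have := j.isLt
      omega
    rw [if_neg hi]
    by_cases hj : j = Fin.last n0
    · rw [if_pos hj, abs_neg]
      exact μ.2 i j hij
    · rw [if_neg hj]
      exact μ.2 i j hij⟩

def Wplus (l : Fin (n0 + 2) → ℤ) (a : ℕ) : Fin (n0 + 1) → ℤ := fun j =>
  if (j : ℕ) < a then l j.castSucc + 1
  else if (j : ℕ) < n0 then l j.succ
  else l (Fin.last (n0 + 1))

theorem isPP_Wplus {l : Fin (n0 + 2) → ℤ} (hl : IsPP l) (a : ℕ) : IsPP (Wplus l a) := by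
  have key3 : ∀ x : Fin (n0 + 2), (x : ℕ) ≤ n0 → |l (Fin.last (n0 + 1))| ≤ l x := by
    intro x hx
    exact hl x (Fin.last (n0 + 1)) (by simp [Fin.lt_def]; omega)
  have key2 : ∀ x : Fin (n0 + 2), (x : ℕ) ≤ n0 → 0 ≤ l x :=
    fun x hx => le_trans (abs_nonneg _) (key3 x hx)
  have key : ∀ x y : Fin (n0 + 2), (x : ℕ) ≤ (y : ℕ) → (y : ℕ) ≤ n0 → l y ≤ l x := by
    intro x y hxy hy
    rcases Nat.eq_or_lt_of_le hxy with h | h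
    · rw [Fin.ext h]
    · exact le_trans (le_abs_self _) (hl x y (Fin.lt_def.mpr h))
  intro i j hij
  have hij' : (i : ℕ) < (j : ℕ) := hij
  have hj1 : (j : ℕ) ≤ n0 := Nat.lt_succ_iff.mp j.isLt
  have hi1 : (i : ℕ) < n0 := lt_of_lt_of_le hij' hj1
  unfold Wplus
  split_ifs with h1 h2 h3 h4 h5
  · have m1 := key i.castSucc j.castSucc
      (by simp only [Fin.coe_castSucc]; omega) (by simp only [Fin.coe_castSucc]; omega)
    have n1 := key2 j.castSucc (by simp only [Fin.coe_castSucc]; omega)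
    rw [abs_of_nonneg (by linarith)]
    linarith
  · exact absurd (by omega : (i : ℕ) < a) h2
  · have m1 := key i.castSucc j.succ
      (by simp only [Fin.coe_castSucc, Fin.val_succ]; omega)
      (by simp only [Fin.val_succ]; omega)
    have n1 := key2 j.succ (by simp only [Fin.val_succ]; omega)
    rw [abs_of_nonneg n1]
    linarith
  · have m1 := key i.succ j.succ
      (by simp only [Fin.val_succ]; omega) (by simp only [Fin.val_succ]; omega)
    have n1 := key2 j.succ (by simp only [Fin.val_succ]; omega)
    rw [abs_of_nonneg n1]
    linarith
  · have m1 := key3 i.castSucc (by simp only [Fin.coe_castSucc]; omega)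
    linarith
  · have m1 := key3 i.succ (by simp only [Fin.val_succ]; omega)
    linarith

def Wminus (l : Fin (n0 + 2) → ℤ) (a : ℕ) : Fin (n0 + 1) → ℤ := fun j =>
  if (j : ℕ) < n0 then (if (j : ℕ) < a then l j.castSucc + 1 else l j.succ)
  else if a ≤ n0 then -(l (Fin.last (n0 + 1))) else -(l j.castSucc) - 1

theorem isPP_Wminus {l : Fin (n0 + 2) → ℤ} (hl : IsPP l) (a : ℕ) : IsPP (Wminus l a) := by
  have key3 : ∀ x : Fin (n0 + 2), (x : ℕ) ≤ n0 → |l (Fin.last (n0 + 1))| ≤ l x := by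
    intro x hx
    exact hl x (Fin.last (n0 + 1)) (by simp [Fin.lt_def]; omega)
  have key2 : ∀ x : Fin (n0 + 2), (x : ℕ) ≤ n0 → 0 ≤ l x :=
    fun x hx => le_trans (abs_nonneg _) (key3 x hx)
  have key : ∀ x y : Fin (n0 + 2), (x : ℕ) ≤ (y : ℕ) → (y : ℕ) ≤ n0 → l y ≤ l x := by
    intro x y hxy hy
    rcases Nat.eq_or_lt_of_le hxy with h | h
    · rw [Fin.ext h]
    · exact le_trans (le_abs_self _) (hl x y (Fin.lt_def.mpr h))
  intro i j hij
  have hij' : (i : ℕ) < (j : ℕ) := hij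
  have hj1 : (j : ℕ) ≤ n0 := Nat.lt_succ_iff.mp j.isLt
  have hi1 : (i : ℕ) < n0 := lt_of_lt_of_le hij' hj1
  unfold Wminus
  split_ifs with h1 h2 h3 h4 h5 h6 h7
  · have m1 := key i.castSucc j.castSucc
      (by simp only [Fin.coe_castSucc]; omega) (by simp only [Fin.coe_castSucc]; omega)
    have n1 := key2 j.castSucc (by simp only [Fin.coe_castSucc]; omega)
    rw [abs_of_nonneg (by linarith)]
    linarith
  · exact absurd (by omega : (i : ℕ) < a) h3
  · have m1 := key i.castSucc j.succ
      (by simp only [Fin.coe_castSucc, Fin.val_succ]; omega)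
      (by simp only [Fin.val_succ]; omega)
    have n1 := key2 j.succ (by simp only [Fin.val_succ]; omega)
    rw [abs_of_nonneg n1]
    linarith
  · have m1 := key i.succ j.succ
      (by simp only [Fin.val_succ]; omega) (by simp only [Fin.val_succ]; omega)
    have n1 := key2 j.succ (by simp only [Fin.val_succ]; omega)
    rw [abs_of_nonneg n1]
    linarith
  · have m1 := key3 i.castSucc (by simp only [Fin.coe_castSucc]; omega)
    rw [abs_neg]
    linarith
  · have m1 := key3 i.succ (by simp only [Fin.val_succ]; omega)
    rw [abs_neg]
    linarith
  · have m1 := key i.castSucc j.castSucc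
      (by simp only [Fin.coe_castSucc]; omega) (by simp only [Fin.coe_castSucc]; omega)
    have n1 := key2 j.castSucc (by simp only [Fin.coe_castSucc]; omega)
    have e1 : -l j.castSucc - 1 = -(l j.castSucc + 1) := by ring
    rw [e1, abs_neg, abs_of_nonneg (by linarith)]
    linarith
  · exact absurd (by omega : (i : ℕ) < a) h7

/-!
Let `P : F → F` send `e_{(μ,q)}` to `sgn(μ_{n−1}) e_{(μ⁺, q mod 2)}`, where `μ⁺` is whichever of
`μ`, `μ*` has nonnegative last entry. The span of the restriction elements is exactly `ker P`.
It lies in `ker P` because `μ ↦ μ*` permutes the terms of `r(λ,p)`, changing the sign of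
`sgn(μ_{n−1})` and of `ℓ_n` but not the parity of the second index. Conversely
`e_{(μ,q)} − P e_{(μ,q)}` lies in the span, by induction on the weight `Σ|μ_i|`: for
`λ = (ν, t)` with `ν_{n−1} ≥ t ≥ 0`, `r(λ,p)` is `e_{(ν,p+t)} + e_{(ν*,p−t)}` (just `e_{(ν,p)}`
if `ν_{n−1} = 0`) plus lighter terms, and the cases `t = 1` and `t = 0` together move `q` by `2`.

As `W_i^− = (W_i^+)*` with second indices of the same parity, the Weyl sum for `c` is mapped by
`P` to `Σ_i ([c_i^+ = ±c] − [c_i^− = ±c]) P W_i^+`. If `p = n` then `c_i^+ = −c_i^−`; if `λ_n = 0`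
then `c_n^+ = c_n^−`, and `W_i^+` has last entry `0` for `i < n`; so the image vanishes.
Otherwise take `c = c_1^+`: then `c_1^− ≠ ±c`, the other `W_i^±` differ from `W_1^+` in the first
entry, and so the coefficient of `e_{((W_1^+)⁺, ·)}` in the image is `sgn(λ_n) ≠ 0`.
-/

lemma IsPP.antitone {k : ℕ} {l : Fin k → ℤ} (hl : IsPP l) : Antitone l := by
  intro i j hij
  rcases hij.eq_or_lt with rfl | hlt
  · exact le_rfl
  · exact (le_abs_self _).trans (hl i j hlt)

lemma IsPP.nonneg_of_lt {k : ℕ} {l : Fin k → ℤ} (hl : IsPP l) {i j : Fin k} (hij : i < j) :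
    0 ≤ l i :=
  (abs_nonneg _).trans (hl i j hij)

lemma IsPP.nonneg {k : ℕ} {l : Fin (k + 1) → ℤ} (hl : IsPP l) (hlast : 0 ≤ l (Fin.last k))
    (i : Fin (k + 1)) : 0 ≤ l i :=
  hlast.trans (hl.antitone (Fin.le_last i))

def negLast (μ : Fin (n0 + 1) → ℤ) : Fin (n0 + 1) → ℤ :=
  fun i => if i = Fin.last n0 then -μ i else μ i

@[simp]
lemma negLast_last (μ : Fin (n0 + 1) → ℤ) : negLast μ (Fin.last n0) = -μ (Fin.last n0) := by
  simp [negLast]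

lemma negLast_of_ne (μ : Fin (n0 + 1) → ℤ) {i : Fin (n0 + 1)} (h : i ≠ Fin.last n0) :
    negLast μ i = μ i :=
  if_neg h

lemma negLast_of_lt (μ : Fin (n0 + 1) → ℤ) {i : ℕ} (hi : i < n0) :
    negLast μ ⟨i, by omega⟩ = μ ⟨i, by omega⟩ :=
  negLast_of_ne μ (by simp [Fin.ext_iff]; omega)

lemma negLast_involutive : Function.Involutive (negLast (n0 := n0)) := by
  intro μ
  funext i
  by_cases h : i = Fin.last n0 <;> simp [negLast, h]

lemma negLast_eq_self_iff {μ : Fin (n0 + 1) → ℤ} : negLast μ = μ ↔ μ (Fin.last n0) = 0 := by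
  refine ⟨fun h => by have := congrFun h (Fin.last n0); simp at this; omega, fun h => ?_⟩
  funext i
  by_cases hi : i = Fin.last n0
  · subst hi; simp [h]
  · exact negLast_of_ne μ hi

lemma abs_negLast_apply (μ : Fin (n0 + 1) → ℤ) (i : Fin (n0 + 1)) : |negLast μ i| = |μ i| := by
  by_cases hi : i = Fin.last n0
  · subst hi; rw [negLast_last, abs_neg]
  · rw [negLast_of_ne μ hi]

lemma isPP_negLast {μ : Fin (n0 + 1) → ℤ} (h : IsPP μ) : IsPP (negLast μ) :=
  (starPP ⟨μ, h⟩).2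

lemma isPP_negLast_iff {μ : Fin (n0 + 1) → ℤ} : IsPP (negLast μ) ↔ IsPP μ :=
  ⟨fun h => negLast_involutive μ ▸ isPP_negLast h, isPP_negLast⟩

lemma Interlace.negLast {l : Fin (n0 + 2) → ℤ} {μ : Fin (n0 + 1) → ℤ} (h : Interlace l μ) :
    Interlace l (negLast μ) := by
  obtain ⟨h1, h2, h3⟩ := h
  refine ⟨fun i hi => ?_, fun hn => ?_, by rwa [abs_negLast_apply]⟩
  · simpa only [negLast_of_lt μ (show i < n0 by omega)] using h1 i hi
  · simpa only [negLast_of_lt μ (show n0 - 1 < n0 by omega)] using h2 hn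

lemma interlace_negLast_iff {l : Fin (n0 + 2) → ℤ} {μ : Fin (n0 + 1) → ℤ} :
    Interlace l (negLast μ) ↔ Interlace l μ :=
  ⟨fun h => negLast_involutive μ ▸ h.negLast, Interlace.negLast⟩

lemma lvec_negLast (l : Fin (n0 + 2) → ℤ) (μ : Fin (n0 + 1) → ℤ) :
    lvec l (negLast μ) = lvec l μ := by
  funext i
  have hi := i.isLt
  unfold lvec
  by_cases hn : (i : ℕ) = n0
  · have hil : i = Fin.last n0 := Fin.ext hn
    by_cases h0 : (i : ℕ) = 0
    · simp only [if_pos h0, if_pos hn, negLast_last, abs_neg]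
    · simp only [if_neg h0, if_pos hn, negLast_last, abs_neg,
        negLast_of_lt μ (show (i : ℕ) - 1 < n0 by omega)]
  · have hil : i ≠ Fin.last n0 := fun h => hn (by simp [h])
    by_cases h0 : (i : ℕ) = 0
    · simp only [if_pos h0, if_neg hn, negLast_of_ne μ hil]
    · simp only [if_neg h0, if_neg hn, negLast_of_ne μ hil,
        negLast_of_lt μ (show (i : ℕ) - 1 < n0 by omega)]

lemma mult_negLast (l : Fin (n0 + 2) → ℤ) (μ : Fin (n0 + 1) → ℤ) (k : ℤ) :
    mult l (negLast μ) k = mult l μ k := by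
  rw [mult, mult, lvec_negLast]

lemma lsgn_negLast (l : Fin (n0 + 2) → ℤ) (μ : Fin (n0 + 1) → ℤ) :
    lsgn l (negLast μ) = -lsgn l μ := by
  rw [lsgn, lsgn, negLast_last, abs_neg, Int.sign_neg]
  ring

lemma mem_Icc_neg_iff {k : ℕ} {μ : Fin k → ℤ} {b : ℤ} :
    μ ∈ Finset.Icc (fun _ => -b) (fun _ => b) ↔ ∀ i, |μ i| ≤ b := by
  simp only [Finset.mem_Icc, Pi.le_def, abs_le, forall_and]

lemma negLast_mem_Icc {μ : Fin (n0 + 1) → ℤ} {b : ℤ}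
    (h : μ ∈ Finset.Icc (fun _ => -b) (fun _ => b)) :
    negLast μ ∈ Finset.Icc (fun _ => -b) (fun _ => b) :=
  mem_Icc_neg_iff.mpr fun i => (abs_negLast_apply μ i).trans_le (mem_Icc_neg_iff.mp h i)

def wt (μ : Fin (n0 + 1) → ℤ) : ℕ := ∑ i, (μ i).natAbs

lemma wt_negLast (μ : Fin (n0 + 1) → ℤ) : wt (negLast μ) = wt μ := by
  refine Finset.sum_congr rfl fun i _ => ?_
  by_cases hi : i = Fin.last n0
  · subst hi; rw [negLast_last, Int.natAbs_neg]
  · rw [negLast_of_ne μ hi]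

lemma starPP_val (μ : ZPP (n0 + 1)) : (starPP μ).1 = negLast μ.1 := rfl

lemma starPP_starPP (μ : ZPP (n0 + 1)) : starPP (starPP μ) = μ :=
  Subtype.ext (negLast_involutive μ.1)

def canonPP (μ : ZPP (n0 + 1)) : ZPP (n0 + 1) :=
  if μ.1 (Fin.last n0) < 0 then starPP μ else μ

lemma canonPP_of_nonneg {μ : ZPP (n0 + 1)} (h : 0 ≤ μ.1 (Fin.last n0)) : canonPP μ = μ :=
  if_neg (not_lt.mpr h)

lemma canonPP_last (μ : ZPP (n0 + 1)) : (canonPP μ).1 (Fin.last n0) = |μ.1 (Fin.last n0)| := by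
  unfold canonPP
  split_ifs with h
  · rw [starPP_val, negLast_last, abs_of_neg h]
  · rw [abs_of_nonneg (not_lt.mp h)]

lemma canonPP_canonPP (μ : ZPP (n0 + 1)) : canonPP (canonPP μ) = canonPP μ :=
  canonPP_of_nonneg (by rw [canonPP_last]; exact abs_nonneg _)

lemma canonPP_starPP (μ : ZPP (n0 + 1)) : canonPP (starPP μ) = canonPP μ := by
  rcases lt_trichotomy (μ.1 (Fin.last n0)) 0 with h | h | h
  · rw [canonPP_of_nonneg (by rw [starPP_val, negLast_last]; omega), canonPP, if_pos h]
  · have hμ : starPP μ = μ := Subtype.ext (negLast_eq_self_iff.mpr h)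
    rw [hμ]
  · rw [canonPP, if_pos (by rw [starPP_val, negLast_last]; omega), starPP_starPP,
      canonPP_of_nonneg h.le]

lemma abs_canonPP_apply (μ : ZPP (n0 + 1)) (i : Fin (n0 + 1)) :
    |(canonPP μ).1 i| = |μ.1 i| := by
  unfold canonPP
  split_ifs
  exacts [abs_negLast_apply μ.1 i, rfl]

noncomputable def canonProj : FSO n0 →ₗ[ℤ] FSO n0 :=
  Finsupp.linearCombination ℤ fun k =>
    (k.1.1 (Fin.last n0)).sign • Finsupp.single (canonPP k.1, k.2 % 2) 1

lemma canonProj_single (k : ZPP (n0 + 1) × ℤ) (c : ℤ) :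
    canonProj (Finsupp.single k c) =
      (c * (k.1.1 (Fin.last n0)).sign) • Finsupp.single (canonPP k.1, k.2 % 2) 1 := by
  rw [canonProj, Finsupp.linearCombination_single, smul_smul]

lemma canonProj_canonProj (x : FSO n0) : canonProj (canonProj x) = canonProj x := by
  change (canonProj ∘ₗ canonProj) x = canonProj x
  congr 1
  refine Finsupp.lhom_ext fun k c => ?_
  rw [LinearMap.comp_apply, canonProj_single, map_smul, canonProj_single, smul_smul,
    canonPP_canonPP, canonPP_last, Int.emod_emod_of_dvd _ dvd_rfl]
  congr 1
  rcases lt_trichotomy (k.1.1 (Fin.last n0)) 0 with h | h | h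
  · simp [Int.sign_eq_neg_one_of_neg h, abs_of_neg h, Int.sign_eq_one_of_pos (neg_pos.mpr h)]
  · simp [h]
  · simp [Int.sign_eq_one_of_pos h, abs_of_pos h]

lemma canonProj_single_starPP (μ : ZPP (n0 + 1)) {q q' : ℤ} (h : q' % 2 = q % 2) (c : ℤ) :
    canonProj (Finsupp.single (starPP μ, q') c) = -canonProj (Finsupp.single (μ, q) c) := by
  rw [canonProj_single, canonProj_single, canonPP_starPP, h, starPP_val, negLast_last,
    Int.sign_neg, ← neg_smul]
  ring_nf

noncomputable def rTerm (l : Fin (n0 + 2) → ℤ) (p : ℤ) (μ : Fin (n0 + 1) → ℤ) : FSO n0 :=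
  if h : IsPP μ ∧ Interlace l μ then
    ∑ k ∈ Finset.Icc (0 : ℤ) (∑ i, lvec l μ i),
      (mult l μ k : ℤ) •
        Finsupp.single ((⟨μ, h.1⟩ : ZPP (n0 + 1)), p + lsgn l μ + 2 * k - ∑ i, lvec l μ i) 1
  else 0

lemma rSO_eq_sum_rTerm (l : Fin (n0 + 2) → ℤ) (p : ℤ) :
    rSO l p = ∑ μ ∈ Finset.Icc (fun _ => -(l 0)) (fun _ => l 0), rTerm l p μ :=
  rfl

lemma canonProj_rTerm_negLast (l : Fin (n0 + 2) → ℤ) (p : ℤ) (μ : Fin (n0 + 1) → ℤ) :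
    canonProj (rTerm l p (negLast μ)) = -canonProj (rTerm l p μ) := by
  by_cases h : IsPP μ ∧ Interlace l μ
  · have h' : IsPP (negLast μ) ∧ Interlace l (negLast μ) :=
      ⟨isPP_negLast h.1, interlace_negLast_iff.mpr h.2⟩
    rw [rTerm, rTerm, dif_pos h, dif_pos h', map_sum, map_sum, ← Finset.sum_neg_distrib,
      lvec_negLast]
    refine Finset.sum_congr rfl fun k _ => ?_
    rw [map_smul, map_smul, mult_negLast, lsgn_negLast, ← smul_neg]
    congr 1
    exact canonProj_single_starPP ⟨μ, h.1⟩ (by omega) 1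
  · have h' : ¬(IsPP (negLast μ) ∧ Interlace l (negLast μ)) := by
      rwa [isPP_negLast_iff, interlace_negLast_iff]
    rw [rTerm, rTerm, dif_neg h, dif_neg h', map_zero, neg_zero]

lemma canonProj_rSO (l : Fin (n0 + 2) → ℤ) (p : ℤ) : canonProj (rSO l p) = 0 := by
  rw [rSO_eq_sum_rTerm, map_sum, ← self_eq_neg, ← Finset.sum_neg_distrib]
  refine Finset.sum_nbij' negLast negLast (fun μ hμ => negLast_mem_Icc hμ)
    (fun μ hμ => negLast_mem_Icc hμ) (fun μ _ => negLast_involutive μ)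
    (fun μ _ => negLast_involutive μ) fun μ _ => ?_
  rw [canonProj_rTerm_negLast, neg_neg]

noncomputable def rSpan (n0 : ℕ) : Submodule ℤ (FSO n0) :=
  Submodule.span ℤ {x : FSO n0 | ∃ (l' : Fin (n0 + 2) → ℤ) (p' : ℤ), IsPP l' ∧ x = rSO l' p'}

lemma rSO_mem_rSpan {l : Fin (n0 + 2) → ℤ} (hl : IsPP l) (p : ℤ) : rSO l p ∈ rSpan n0 :=
  Submodule.subset_span ⟨l, p, hl, rfl⟩

lemma canonProj_eq_zero_of_mem_rSpan {x : FSO n0} (hx : x ∈ rSpan n0) : canonProj x = 0 := by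
  have : rSpan n0 ≤ LinearMap.ker canonProj :=
    Submodule.span_le.mpr (by rintro _ ⟨l, p, -, rfl⟩; exact canonProj_rSO l p)
  exact this hx

lemma snoc_mk (ν : Fin (n0 + 1) → ℤ) (t : ℤ) {i : ℕ} (h : i < n0 + 1) :
    (Fin.snoc ν t : Fin (n0 + 2) → ℤ) ⟨i, by omega⟩ = ν ⟨i, h⟩ := by
  simp [Fin.snoc, h]

lemma snoc_mk_last (ν : Fin (n0 + 1) → ℤ) (t : ℤ) :
    (Fin.snoc ν t : Fin (n0 + 2) → ℤ) ⟨n0 + 1, by omega⟩ = t :=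
  Fin.snoc_last (α := fun _ => ℤ) t ν

section Corner

variable {ν : Fin (n0 + 1) → ℤ} {t : ℤ}

lemma isPP_snoc (hν : IsPP ν) (ht0 : 0 ≤ t) (ht : t ≤ ν (Fin.last n0)) :
    IsPP (Fin.snoc ν t : Fin (n0 + 2) → ℤ) := by
  intro i j hij
  obtain ⟨i, rfl⟩ := Fin.exists_castSucc_eq.mpr (Fin.ne_last_of_lt hij)
  induction j using Fin.lastCases with
  | last =>
    rw [Fin.snoc_last, Fin.snoc_castSucc, abs_of_nonneg ht0]
    exact ht.trans (hν.antitone (Fin.le_last i))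
  | cast j =>
    rw [Fin.snoc_castSucc, Fin.snoc_castSucc]
    exact hν i j (Fin.castSucc_lt_castSucc_iff.mp hij)

lemma interlace_snoc_self (hν : IsPP ν) (ht0 : 0 ≤ t) (ht : t ≤ ν (Fin.last n0)) :
    Interlace (Fin.snoc ν t) ν := by
  refine ⟨fun i hi => ?_, fun hn => ?_, ?_⟩
  · rw [snoc_mk ν t (by omega), snoc_mk ν t (by omega)]
    exact ⟨le_rfl, hν.antitone (Fin.mk_le_mk.mpr (by omega))⟩
  · rw [snoc_mk ν t (by omega), snoc_mk_last, abs_of_nonneg ht0]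
    exact ⟨le_rfl, ht.trans (hν.antitone (Fin.le_last _))⟩
  · rw [snoc_mk ν t (by omega)]
    exact (abs_of_nonneg (ht0.trans ht)).le

lemma bounds_of_interlace_snoc (hν : IsPP ν) (ht0 : 0 ≤ t) (ht : t ≤ ν (Fin.last n0))
    {μ : Fin (n0 + 1) → ℤ} (h : Interlace (Fin.snoc ν t) μ) (i : Fin (n0 + 1)) :
    |μ i| ≤ ν i ∧ ((i : ℕ) < n0 → 0 ≤ μ i) := by
  obtain ⟨h1, h2, h3⟩ := h
  have hνi : 0 ≤ ν i := hν.nonneg (ht0.trans ht) i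
  obtain ⟨i, hi⟩ := i
  rcases lt_trichotomy (i + 2) (n0 + 1) with hc | hc | hc
  · obtain ⟨ha, hb⟩ := h1 i (by omega)
    rw [snoc_mk ν t hi] at ha
    rw [snoc_mk ν t hc] at hb
    have := hν.nonneg (ht0.trans ht) ⟨i + 2, hc⟩
    exact ⟨abs_le.mpr ⟨by linarith, ha⟩, fun _ => by linarith⟩
  · obtain ⟨ha, hb⟩ := h2 (by omega)
    obtain rfl : i = n0 - 1 := by omega
    rw [snoc_mk ν t hi] at ha
    rw [snoc_mk_last, abs_of_nonneg ht0] at hb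
    exact ⟨abs_le.mpr ⟨by linarith, ha⟩, fun _ => by linarith⟩
  · obtain rfl : i = n0 := by omega
    rw [snoc_mk ν t hi] at h3
    exact ⟨h3, fun h => absurd h (lt_irrefl _)⟩

lemma wt_lt_of_interlace_snoc (hν : IsPP ν) (ht0 : 0 ≤ t) (ht : t ≤ ν (Fin.last n0))
    {μ : Fin (n0 + 1) → ℤ} (h : Interlace (Fin.snoc ν t) μ) (hne : μ ≠ ν)
    (hne' : μ ≠ negLast ν) : wt μ < wt ν := by
  have hb := bounds_of_interlace_snoc hν ht0 ht h
  have hνnn := hν.nonneg (ht0.trans ht)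
  have hle : ∀ i ∈ Finset.univ, (μ i).natAbs ≤ (ν i).natAbs := fun i _ => by
    have := (hb i).1
    have := hνnn i
    rw [Int.abs_eq_natAbs] at *
    omega
  refine (Finset.sum_le_sum hle).lt_of_ne fun heq => ?_
  have hall := (Finset.sum_eq_sum_iff_of_le hle).mp heq
  have hinit : ∀ i : Fin (n0 + 1), i ≠ Fin.last n0 → μ i = ν i := fun i hi => by
    have := (hb i).2 (Fin.val_lt_last hi)
    have := hall i (Finset.mem_univ _)
    have := hνnn i
    omega
  have hlast := hall (Fin.last n0) (Finset.mem_univ _)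
  have := hνnn (Fin.last n0)
  rcases le_or_gt 0 (μ (Fin.last n0)) with hμ | hμ
  · refine hne (funext fun i => ?_)
    by_cases hi : i = Fin.last n0
    · subst hi; omega
    · exact hinit i hi
  · refine hne' (funext fun i => ?_)
    by_cases hi : i = Fin.last n0
    · subst hi; rw [negLast_last]; omega
    · rw [negLast_of_ne ν hi]; exact hinit i hi

lemma lvec_snoc_self (hν : IsPP ν) (ht0 : 0 ≤ t) (ht : t ≤ ν (Fin.last n0)) :
    lvec (Fin.snoc ν t) ν = 0 := by
  funext i
  obtain ⟨i, hi⟩ := i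
  have hmono : ∀ j k (hj : j < n0 + 1) (hk : k < n0 + 1), j ≤ k → ν ⟨k, hk⟩ ≤ ν ⟨j, hj⟩ :=
    fun j k hj hk hjk => hν.antitone (Fin.mk_le_mk.mpr hjk)
  have hlast : |(Fin.snoc ν t : Fin (n0 + 2) → ℤ) (Fin.last (n0 + 1))| = t := by
    rw [Fin.snoc_last, abs_of_nonneg ht0]
  simp only [lvec, hlast, Fin.castSucc_mk, Fin.succ_mk, snoc_mk ν t hi, Pi.zero_apply]
  split_ifs with h0 hn hn
  · subst hn
    rw [abs_of_nonneg (ht0.trans ht), max_eq_right ht]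
    exact sub_self _
  · rw [snoc_mk ν t (by omega), max_eq_right (hmono _ _ _ _ (by omega))]
    exact sub_self _
  · subst hn
    rw [abs_of_nonneg (ht0.trans ht), max_eq_right ht, min_eq_left (hmono _ _ _ _ (by omega))]
    exact sub_self _
  · rw [snoc_mk ν t (by omega), max_eq_right (hmono _ _ _ _ (by omega)),
      min_eq_left (hmono _ _ _ _ (by omega))]
    exact sub_self _

lemma lsgn_snoc_self (ht0 : 0 ≤ t) (ht : t ≤ ν (Fin.last n0)) : lsgn (Fin.snoc ν t) ν = t := by
  rw [lsgn, Fin.snoc_last, abs_of_nonneg ht0, abs_of_nonneg (ht0.trans ht), min_eq_left ht]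
  rcases ht0.eq_or_lt with rfl | h
  · simp
  · rw [Int.sign_eq_one_of_pos h, Int.sign_eq_one_of_pos (h.trans_le ht)]
    ring

lemma abs_le_snoc_zero (hν : IsPP ν) (ht0 : 0 ≤ t) (ht : t ≤ ν (Fin.last n0))
    (i : Fin (n0 + 1)) : |ν i| ≤ (Fin.snoc ν t : Fin (n0 + 2) → ℤ) 0 := by
  have h0 : (Fin.snoc ν t : Fin (n0 + 2) → ℤ) 0 = ν 0 := by simp [Fin.snoc]
  rw [h0, abs_of_nonneg (hν.nonneg (ht0.trans ht) i)]
  exact hν.antitone (Fin.zero_le i)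

end Corner

lemma rTerm_of_lvec_eq_zero {l : Fin (n0 + 2) → ℤ} {μ : Fin (n0 + 1) → ℤ}
    (h : IsPP μ ∧ Interlace l μ) (h0 : lvec l μ = 0) (p : ℤ) :
    rTerm l p μ = Finsupp.single (⟨μ, h.1⟩, p + lsgn l μ) 1 := by
  have hm : mult l μ 0 = 1 := by
    rw [mult, h0, Finset.Icc_self, Finset.filter_singleton, if_pos (by simp)]
    rfl
  rw [rTerm, dif_pos h, h0]
  simp [hm]

noncomputable def supportedBelow (N : ℕ) : Submodule ℤ (FSO n0) :=
  Finsupp.supported ℤ ℤ {k | wt k.1.1 < N}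

lemma rTerm_mem_supportedBelow {l : Fin (n0 + 2) → ℤ} {μ : Fin (n0 + 1) → ℤ} {N : ℕ}
    (h : Interlace l μ → wt μ < N) (p : ℤ) : rTerm l p μ ∈ supportedBelow N := by
  unfold rTerm
  split_ifs with hμ
  · exact Submodule.sum_mem _ fun k _ => Submodule.smul_mem _ _
      (Finsupp.single_mem_supported ℤ _ (h hμ.2))
  · exact Submodule.zero_mem _

section CornerElement

variable (ν : ZPP (n0 + 1)) {t : ℤ}

lemma rTerm_snoc_self (ht0 : 0 ≤ t) (ht : t ≤ ν.1 (Fin.last n0)) (p : ℤ) :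
    rTerm (Fin.snoc ν.1 t) p ν.1 = Finsupp.single (ν, p + t) 1 := by
  rw [rTerm_of_lvec_eq_zero ⟨ν.2, interlace_snoc_self ν.2 ht0 ht⟩ (lvec_snoc_self ν.2 ht0 ht),
    lsgn_snoc_self ht0 ht]

lemma rTerm_snoc_negLast (ht0 : 0 ≤ t) (ht : t ≤ ν.1 (Fin.last n0)) (p : ℤ) :
    rTerm (Fin.snoc ν.1 t) p (negLast ν.1) = Finsupp.single (starPP ν, p - t) 1 := by
  rw [rTerm_of_lvec_eq_zero ⟨isPP_negLast ν.2, interlace_negLast_iff.mpr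
      (interlace_snoc_self ν.2 ht0 ht)⟩ (by rw [lvec_negLast, lvec_snoc_self ν.2 ht0 ht]),
    lsgn_negLast, lsgn_snoc_self ht0 ht, ← sub_eq_add_neg]
  rfl

lemma rSO_snoc_sub_mem (ht0 : 0 ≤ t) (ht : t ≤ ν.1 (Fin.last n0)) (p : ℤ) :
    rSO (Fin.snoc ν.1 t) p - ∑ μ ∈ {ν.1, negLast ν.1}, rTerm (Fin.snoc ν.1 t) p μ ∈
      supportedBelow (wt ν.1) := by
  have hsub : {ν.1, negLast ν.1} ⊆ Finset.Icc (fun _ => -(Fin.snoc ν.1 t : Fin (n0 + 2) → ℤ) 0)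
      (fun _ => (Fin.snoc ν.1 t : Fin (n0 + 2) → ℤ) 0) := by
    intro μ hμ
    rcases Finset.mem_insert.mp hμ with rfl | hμ
    · exact mem_Icc_neg_iff.mpr (abs_le_snoc_zero ν.2 ht0 ht)
    · rw [Finset.mem_singleton.mp hμ]
      exact mem_Icc_neg_iff.mpr fun i => (abs_negLast_apply _ i).trans_le
        (abs_le_snoc_zero ν.2 ht0 ht i)
  rw [rSO_eq_sum_rTerm, ← Finset.sum_sdiff hsub, add_sub_cancel_right]
  refine Submodule.sum_mem _ fun μ hμ => rTerm_mem_supportedBelow (fun hint => ?_) p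
  simp only [Finset.mem_sdiff, Finset.mem_insert, Finset.mem_singleton, not_or] at hμ
  exact wt_lt_of_interlace_snoc ν.2 ht0 ht hint hμ.2.1 hμ.2.2

lemma rSO_snoc_sub_of_pos (hpos : 0 < ν.1 (Fin.last n0)) (ht0 : 0 ≤ t)
    (ht : t ≤ ν.1 (Fin.last n0)) (p : ℤ) :
    rSO (Fin.snoc ν.1 t) p - Finsupp.single (ν, p + t) 1 - Finsupp.single (starPP ν, p - t) 1 ∈
      supportedBelow (wt ν.1) := by
  have hne : ν.1 ≠ negLast ν.1 := fun h => by
    have := negLast_eq_self_iff.mp h.symm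
    omega
  rw [sub_sub, ← rTerm_snoc_self ν ht0 ht, ← rTerm_snoc_negLast ν ht0 ht, ← Finset.sum_pair hne]
  exact rSO_snoc_sub_mem ν ht0 ht p

end CornerElement

lemma rSO_snoc_sub_of_eq_zero (ν : ZPP (n0 + 1)) (h0 : ν.1 (Fin.last n0) = 0) (p : ℤ) :
    rSO (Fin.snoc ν.1 0) p - Finsupp.single (ν, p) 1 ∈ supportedBelow (wt ν.1) := by
  have := rSO_snoc_sub_mem ν le_rfl h0.ge p
  rwa [negLast_eq_self_iff.mpr h0, Finset.pair_eq_singleton, Finset.sum_singleton,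
    rTerm_snoc_self ν le_rfl h0.ge, add_zero] at this

section Telescope

variable (ν : ZPP (n0 + 1))

-- The corners `(ν, 1)` and `(ν, 0)` share the term `e_{(ν*, q−2)}`.
lemma single_sub_single_two_mem (hpos : 0 < ν.1 (Fin.last n0)) (q : ℤ) :
    Finsupp.single (ν, q) 1 - Finsupp.single (ν, q - 2) 1 ∈
      rSpan n0 ⊔ supportedBelow (wt ν.1) := by
  have h1 := rSO_snoc_sub_of_pos ν hpos zero_le_one (by omega) (q - 1)
  have h0 := rSO_snoc_sub_of_pos ν hpos le_rfl hpos.le (q - 2)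
  rw [sub_add_cancel, show q - 1 - 1 = q - 2 by ring] at h1
  rw [add_zero, sub_zero] at h0
  have hr := Submodule.sub_mem _ (rSO_mem_rSpan (isPP_snoc ν.2 zero_le_one (by omega)) (q - 1))
    (rSO_mem_rSpan (isPP_snoc ν.2 le_rfl hpos.le) (q - 2))
  convert Submodule.sub_mem _ (Submodule.mem_sup_left hr)
    (Submodule.mem_sup_right (Submodule.sub_mem _ h1 h0)) using 1
  abel

lemma single_sub_single_mem (hpos : 0 < ν.1 (Fin.last n0)) (q m : ℤ) :
    Finsupp.single (ν, q) 1 - Finsupp.single (ν, q - 2 * m) 1 ∈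
      rSpan n0 ⊔ supportedBelow (wt ν.1) := by
  induction m using Int.induction_on with
  | zero => simp
  | succ m ih =>
    have := Submodule.add_mem _ ih (single_sub_single_two_mem ν hpos (q - 2 * m))
    rwa [sub_add_sub_cancel, show q - 2 * m - 2 = q - 2 * (m + 1) by ring] at this
  | pred m ih =>
    have := Submodule.sub_mem _ ih (single_sub_single_two_mem ν hpos (q - 2 * (-m - 1)))
    rwa [show q - 2 * (-m - 1) - 2 = q - 2 * -m by ring, sub_sub_sub_cancel_right] at this

end Telescope

lemma single_sub_canonProj_mem (k : ZPP (n0 + 1) × ℤ) :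
    Finsupp.single k 1 - canonProj (Finsupp.single k 1) ∈
      rSpan n0 ⊔ supportedBelow (wt k.1.1) := by
  obtain ⟨μ, q⟩ := k
  have hq : q - 2 * (q / 2) = q % 2 := (Int.emod_def q 2).symm
  rw [canonProj_single, one_mul]
  rcases lt_trichotomy (μ.1 (Fin.last n0)) 0 with h | h | h
  · -- `μ = ν*` with `ν_{n−1} > 0`: the corner `(ν, 0)`, then move `e_{(ν,q)}` to `e_{(ν, q % 2)}`
    obtain ⟨ν, rfl⟩ : ∃ ν, μ = starPP ν := ⟨starPP μ, (starPP_starPP μ).symm⟩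
    have hpos : 0 < ν.1 (Fin.last n0) := by
      rw [starPP_val, negLast_last] at h
      omega
    have hc := rSO_snoc_sub_of_pos ν hpos le_rfl hpos.le q
    have hch := single_sub_single_mem ν hpos q (q / 2)
    rw [add_zero, sub_zero] at hc
    rw [hq] at hch
    rw [Int.sign_eq_neg_one_of_neg h, canonPP, if_pos h, starPP_starPP, neg_one_smul,
      sub_neg_eq_add, starPP_val, wt_negLast]
    have hr := rSO_mem_rSpan (isPP_snoc ν.2 le_rfl hpos.le) q
    convert Submodule.sub_mem _ (Submodule.sub_mem _ (Submodule.mem_sup_left hr)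
      (Submodule.mem_sup_right hc)) hch using 1
    abel
  · rw [h, Int.sign_zero, zero_smul, sub_zero]
    have hr := rSO_mem_rSpan (isPP_snoc μ.2 le_rfl h.ge) q
    convert Submodule.sub_mem _ (Submodule.mem_sup_left hr)
      (Submodule.mem_sup_right (rSO_snoc_sub_of_eq_zero μ h q)) using 1
    abel
  · rw [Int.sign_eq_one_of_pos h, one_smul, canonPP_of_nonneg h.le, ← hq]
    exact single_sub_single_mem μ h q (q / 2)

lemma mem_supportedBelow_sup (x : FSO n0) :
    x ∈ supportedBelow (x.support.sup (fun k => wt k.1.1) + 1) :=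
  (Finsupp.mem_supported ℤ x).mpr fun _ hk =>
    Nat.lt_succ_of_le (Finset.le_sup (f := fun k => wt k.1.1) hk)

lemma sub_canonProj_mem_rSpan (x : FSO n0) : x - canonProj x ∈ rSpan n0 := by
  suffices h : ∀ N, supportedBelow N ≤ (rSpan n0).comap (LinearMap.id - canonProj) from
    h _ (mem_supportedBelow_sup x)
  intro N
  induction N with
  | zero =>
    have : {k : ZPP (n0 + 1) × ℤ | wt k.1.1 < 0} = ∅ := by simp
    rw [supportedBelow, this, Finsupp.supported_empty]
    exact bot_le
  | succ N ih =>
    rw [supportedBelow, Finsupp.supported_eq_span_single, Submodule.span_le]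
    rintro _ ⟨k, hk, rfl⟩
    obtain ⟨y, hy, z, hz, hyz⟩ := Submodule.mem_sup.mp (single_sub_canonProj_mem k)
    have hzN : z ∈ supportedBelow N :=
      Finsupp.supported_mono (fun k' hk' => lt_of_lt_of_le hk' (Nat.lt_succ_iff.mp hk)) hz
    have hPz : canonProj z = 0 := by
      rw [eq_sub_of_add_eq' hyz, map_sub, map_sub, canonProj_canonProj,
        canonProj_eq_zero_of_mem_rSpan hy, sub_self, sub_zero]
    have hz' : z ∈ rSpan n0 := by simpa [hPz] using ih hzN
    simpa [← hyz] using Submodule.add_mem _ hy hz'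

lemma mem_rSpan_iff {x : FSO n0} : x ∈ rSpan n0 ↔ canonProj x = 0 :=
  ⟨canonProj_eq_zero_of_mem_rSpan, fun h => by simpa [h] using sub_canonProj_mem_rSpan x⟩

lemma Wplus_last (l : Fin (n0 + 2) → ℤ) {a : ℕ} (ha : a ≤ n0) :
    Wplus l a (Fin.last n0) = l (Fin.last (n0 + 1)) := by
  simp [Wplus, ha]

lemma Wminus_eq_negLast (l : Fin (n0 + 2) → ℤ) {a : ℕ} (ha : a ≤ n0 + 1) :
    Wminus l a = negLast (Wplus l a) := by
  funext j
  by_cases hj : j = Fin.last n0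
  · subst hj
    rcases Nat.lt_or_ge n0 a with h | h
    · simp [Wminus, Wplus, h, show ¬a ≤ n0 by omega]
      ring
    · simp [Wminus, Wplus, h, show ¬n0 < a by omega]
  · have hjv : (j : ℕ) < n0 := Fin.val_lt_last hj
    rw [negLast_of_ne _ hj]
    simp [Wminus, Wplus, hjv]

section Weyl

variable {l : Fin (n0 + 2) → ℤ}

-- Only the first entry is needed: it is `λ_1 + 1` for `a > 0` and at most `λ_1` in absolute
-- value for `a = 0`.
lemma canonPP_Wplus_ne_of_pos (hl : IsPP l) {a : ℕ} (ha : 0 < a) :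
    canonPP ⟨Wplus l a, isPP_Wplus hl a⟩ ≠ canonPP ⟨Wplus l 0, isPP_Wplus hl 0⟩ := by
  intro h
  have habs := congrArg (fun μ : ZPP (n0 + 1) => |μ.1 0|) h
  simp only [abs_canonPP_apply] at habs
  have hl0 : 0 ≤ l 0 := hl.nonneg_of_lt Fin.last_pos
  have h1 : Wplus l a 0 = l 0 + 1 := by simp [Wplus, ha]
  have h2 : |Wplus l 0 0| ≤ l 0 := by
    unfold Wplus
    split_ifs
    exacts [absurd ‹_› (lt_irrefl 0), hl 0 _ (by simp), hl 0 _ Fin.last_pos]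
  rw [h1, abs_of_nonneg (by omega)] at habs
  omega

variable (hl : IsPP l) (p : ℤ)

noncomputable def weylPlus (a : Fin (n0 + 2)) : FSO n0 :=
  ((-1 : ℤ) ^ (a : ℕ)) •
    Finsupp.single ((⟨Wplus l a, isPP_Wplus hl a⟩ : ZPP (n0 + 1)), p + l a - (a : ℕ)) 1

noncomputable def weylMinus (a : Fin (n0 + 2)) : FSO n0 :=
  ((-1 : ℤ) ^ (a : ℕ)) •
    Finsupp.single ((⟨Wminus l a, isPP_Wminus hl a⟩ : ZPP (n0 + 1)),
      p - l a - 2 * n0 - 2 + (a : ℕ)) 1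

noncomputable def weylTerm (c : ℤ) (a : Fin (n0 + 2)) : FSO n0 :=
  (if (-p + l a - (a : ℕ) + 2 * n0 + 3) ^ 2 = c ^ 2 then weylPlus hl p a else 0) +
    (if (-p - l a + (a : ℕ) + 1) ^ 2 = c ^ 2 then weylMinus hl p a else 0)

lemma canonProj_weylPlus (a : Fin (n0 + 2)) :
    canonProj (weylPlus hl p a) =
      ((-1 : ℤ) ^ (a : ℕ) * (Wplus l a (Fin.last n0)).sign) •
        Finsupp.single (canonPP ⟨Wplus l a, isPP_Wplus hl a⟩, (p + l a - (a : ℕ)) % 2) 1 := by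
  rw [weylPlus, map_smul, canonProj_single, smul_smul, one_mul]

lemma canonProj_weylMinus (a : Fin (n0 + 2)) :
    canonProj (weylMinus hl p a) = -canonProj (weylPlus hl p a) := by
  have hstar : (⟨Wminus l a, isPP_Wminus hl a⟩ : ZPP (n0 + 1)) =
      starPP ⟨Wplus l a, isPP_Wplus hl a⟩ :=
    Subtype.ext (Wminus_eq_negLast l (by omega))
  rw [weylMinus, weylPlus, map_smul, map_smul, ← smul_neg, hstar,
    canonProj_single_starPP _ (q := p + l a - (a : ℕ)) (by omega)]

lemma canonProj_weylTerm (c : ℤ) (a : Fin (n0 + 2)) :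
    canonProj (weylTerm hl p c a) =
      ((if (-p + l a - (a : ℕ) + 2 * n0 + 3) ^ 2 = c ^ 2 then 1 else 0) -
        (if (-p - l a + (a : ℕ) + 1) ^ 2 = c ^ 2 then 1 else 0) : ℤ) •
          canonProj (weylPlus hl p a) := by
  rw [weylTerm]
  split_ifs <;> simp [canonProj_weylMinus, sub_eq_add_neg]

lemma canonProj_weylTerm_eq_zero (h : p = n0 + 2 ∨ l (Fin.last (n0 + 1)) = 0) (c : ℤ)
    (a : Fin (n0 + 2)) : canonProj (weylTerm hl p c a) = 0 := by
  rw [canonProj_weylTerm]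
  rcases h with rfl | hz
  · rw [show -(n0 + 2 : ℤ) + l a - (a : ℕ) + 2 * n0 + 3 = -(-(n0 + 2) - l a + (a : ℕ) + 1) by
        ring, neg_sq, sub_self, zero_smul]
  · by_cases ha : (a : ℕ) ≤ n0
    · rw [canonProj_weylPlus, Wplus_last l ha, hz, Int.sign_zero, mul_zero, zero_smul, smul_zero]
    · obtain rfl : a = Fin.last (n0 + 1) := Fin.ext (by have := a.isLt; simp; omega)
      rw [show -p + l (Fin.last (n0 + 1)) - ((Fin.last (n0 + 1) : ℕ) : ℤ) + 2 * n0 + 3 =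
          -p - l (Fin.last (n0 + 1)) + ((Fin.last (n0 + 1) : ℕ) : ℤ) + 1 by
            simp only [hz, Fin.val_last]; push_cast; ring,
        sub_self, zero_smul]

lemma canonProj_sum_weylTerm_ne_zero (hp : p ≠ n0 + 2) (hz : l (Fin.last (n0 + 1)) ≠ 0) :
    ∑ a, canonProj (weylTerm hl p (-p + l 0 + 2 * n0 + 3) a) ≠ 0 := by
  have hl0 : 0 ≤ l 0 := hl.nonneg_of_lt Fin.last_pos
  have hplus : (-p + l 0 - ((0 : Fin (n0 + 2)) : ℕ) + 2 * n0 + 3) ^ 2 =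
      (-p + l 0 + 2 * n0 + 3) ^ 2 := by simp
  have hminus : (-p - l 0 + ((0 : Fin (n0 + 2)) : ℕ) + 1) ^ 2 ≠ (-p + l 0 + 2 * n0 + 3) ^ 2 := by
    rw [Fin.val_zero, Nat.cast_zero, add_zero, Ne, sq_eq_sq_iff_eq_or_eq_neg]
    omega
  intro h
  have h0 := DFunLike.congr_fun h
    (canonPP ⟨Wplus l 0, isPP_Wplus hl 0⟩, (p + l 0 - ((0 : Fin (n0 + 2)) : ℕ)) % 2)
  rw [Finsupp.finsetSum_apply, Finset.sum_eq_single 0, canonProj_weylTerm,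
    if_pos hplus, if_neg hminus, canonProj_weylPlus] at h0
  · simp [Wplus_last l (Nat.zero_le n0), hz] at h0
  · intro a _ ha
    have hkey : (canonPP ⟨Wplus l a, isPP_Wplus hl a⟩, (p + l a - (a : ℕ)) % 2) ≠
        (canonPP ⟨Wplus l 0, isPP_Wplus hl 0⟩, (p + l 0 - ((0 : Fin (n0 + 2)) : ℕ)) % 2) :=
      fun hk => canonPP_Wplus_ne_of_pos hl (Fin.pos_iff_ne_zero.mpr ha) (congrArg Prod.fst hk)
    rw [canonProj_weylTerm, canonProj_weylPlus, Finsupp.smul_apply, Finsupp.smul_apply,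
      Finsupp.single_apply, if_neg hkey, smul_zero, smul_zero]
  · simp

end Weyl

/-- Here `n = n0 + 2`, and the summand for `a : Fin (n0 + 2)` is the pair `W_{a+1}^±`. -/
theorem so_good_iff (n0 : ℕ) (l : Fin (n0 + 2) → ℤ) (hl : IsPP l) (p : ℤ) :
    (∀ c : ℤ,
      (∑ a : Fin (n0 + 2),
        ((if (-p + l a - (a : ℕ) + 2 * n0 + 3) ^ 2 = c ^ 2 then
            ((-1 : ℤ) ^ (a : ℕ)) •
              Finsupp.single ((⟨Wplus l a, isPP_Wplus hl a⟩ : ZPP (n0 + 1)),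
                p + l a - (a : ℕ)) 1
          else 0) +
        (if (-p - l a + (a : ℕ) + 1) ^ 2 = c ^ 2 then
            ((-1 : ℤ) ^ (a : ℕ)) •
              Finsupp.single ((⟨Wminus l a, isPP_Wminus hl a⟩ : ZPP (n0 + 1)),
                p - l a - 2 * n0 - 2 + (a : ℕ)) 1
          else 0)))
        ∈ Submodule.span ℤ
            {x : FSO n0 | ∃ (l' : Fin (n0 + 2) → ℤ) (p' : ℤ), IsPP l' ∧ x = rSO l' p'})
      ↔ (p = n0 + 2 ∨ l (Fin.last (n0 + 1)) = 0) := by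
  change (∀ c : ℤ, ∑ a, weylTerm hl p c a ∈ rSpan n0) ↔ _
  simp only [mem_rSpan_iff, map_sum]
  refine ⟨fun hgood => ?_, fun h c => Finset.sum_eq_zero fun a _ =>
    canonProj_weylTerm_eq_zero hl p h c a⟩
  by_contra! hne
  exact canonProj_sum_weylTerm_ne_zero hl p hne.1 hne.2 (hgood _)
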